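/- Let P ⊆ ℝⁿ be a discrete point set and p ∈ P a boundary point of conv(P). If the direction cone C(p) = cone(P − p) is finitely generated, then the Voronoi cell V(p) is a polyhedron. -/

import Mathlib

open scoped RealInnerProductSpace
open Set

noncomputable section

abbrev E (n : ℕ) := EuclideanSpace ℝ (Fin n)

/-- `P` is discrete: every bounded set contains only finitely many points of `P`. -/
def IsDiscretePointSet {n : ℕ} (P : Set (E n)) : Prop :=
  ∀ B : Set (E n), Bornology.IsBounded B → (P ∩ B).Finite

/-- The Voronoi cell of `p` relative to `P`. -/
def voronoiCell {n : ℕ} (P : Set (E n)) (p : E n) : Set (E n) :=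
  {x | ∀ q ∈ P, dist x p ≤ dist x q}

/-- A polyhedron: a finite intersection of closed half-spaces. -/
def IsPolyhedron {n : ℕ} (S : Set (E n)) : Prop :=
  ∃ (k : ℕ) (y : Fin k → E n) (α : Fin k → ℝ),
    S = ⋂ i, {x : E n | (inner ℝ x (y i) : ℝ) ≤ α i}

/-- A polytope: a bounded polyhedron. -/
def IsPolytope {n : ℕ} (S : Set (E n)) : Prop :=
  IsPolyhedron S ∧ Bornology.IsBounded S

/-- The half-space of points at least as close to `p` as to `q`. -/
def halfSpace {n : ℕ} (p q : E n) : Set (E n) :=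
  {x : E n | (inner ℝ (x - p) (q - p) : ℝ) ≤ (1/2) * ‖q - p‖^2}

/-- The conic hull: all nonnegative combinations of finitely many elements of `M`. -/
def coneHull {n : ℕ} (M : Set (E n)) : Set (E n) :=
  {x | ∃ (k : ℕ) (v : Fin k → E n) (c : Fin k → ℝ),
    (∀ i, v i ∈ M) ∧ (∀ i, 0 ≤ c i) ∧ x = ∑ i, c i • v i}

/-- The direction cone of `p`: the conic hull of `P - p`. -/
def dirCone {n : ℕ} (P : Set (E n)) (p : E n) : Set (E n) :=
  coneHull ((fun q => q - p) '' P)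

/-- A cone is finitely generated if it is the conic hull of finitely many vectors. -/
def FinitelyGeneratedCone {n : ℕ} (C : Set (E n)) : Prop :=
  ∃ (k : ℕ) (v : Fin k → E n), C = coneHull (Set.range v)

/-- `q` is Voronoi relevant for `p`: dropping `halfSpace p q` strictly enlarges the
intersection defining the Voronoi cell. -/
def VoronoiRelevant {n : ℕ} (P : Set (E n)) (p q : E n) : Prop :=
  (⋂ r ∈ P \ {p}, halfSpace p r) ⊂ ⋂ r ∈ P \ {p, q}, halfSpace p r

/-! Since `C(p)` is finitely generated, it is generated by the vectors `q - p` for `q` in a finite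
set `T ⊆ P`. By the conic Carathéodory theorem, every `u ∈ C(p)` is a nonnegative combination of
linearly independent generators, hence one with coefficient sum at most `D * ‖u‖` for a constant `D`.
So if `x` satisfies the bisector constraints of the points of `T`, then `⟪x - p, r - p⟫` grows at
most linearly in `‖r - p‖`, while the constraint of `r ∈ P` only asks for `‖r - p‖ ^ 2 / 2`: only
the points of `P` in a ball around `p` matter, and by discreteness they are finitely many. -/

open Function Finset

section ConicCaratheodory

variable {ι 𝕜 V : Type*} [Fintype ι] [Field 𝕜] [LinearOrder 𝕜] [IsStrictOrderedRing 𝕜]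
  [AddCommGroup V] [Module 𝕜 V]

lemma exists_sub_smul_nonneg_support_ssubset {a d : ι → 𝕜} (ha : 0 ≤ a)
    (hd : support d ⊆ support a) (hpos : ∃ j, 0 < d j) :
    ∃ t : 𝕜, 0 ≤ a - t • d ∧ support (a - t • d) ⊂ support a := by
  classical
  obtain ⟨j, hj⟩ := hpos
  obtain ⟨j₀, hj₀, hmin⟩ := exists_min_image ({i | 0 < d i} : Finset ι) (fun i => a i / d i)
    ⟨j, by simpa using hj⟩
  simp only [mem_filter, Finset.mem_univ, true_and] at hj₀ hmin
  have ht : 0 ≤ a j₀ / d j₀ := div_nonneg (ha j₀) hj₀.le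
  refine ⟨a j₀ / d j₀, fun i => ?_, ?_⟩
  · simp only [Pi.zero_apply, Pi.sub_apply, Pi.smul_apply, smul_eq_mul, sub_nonneg]
    rcases le_or_gt (d i) 0 with hdi | hdi
    · exact (mul_nonpos_of_nonneg_of_nonpos ht hdi).trans (ha i)
    · exact (le_div_iff₀ hdi).1 (hmin i hdi)
  · have hsub : support (a - (a j₀ / d j₀) • d) ⊆ support a := fun i hi hai => by
      have hdi : d i = 0 := notMem_support.1 fun h => hd h hai
      simp [hai, hdi] at hi
    refine (Set.ssubset_iff_of_subset hsub).2 ⟨j₀, hd hj₀.ne', ?_⟩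
    simp [div_mul_cancel₀ _ hj₀.ne']

lemma exists_nonneg_support_ssubset_of_not_linearIndepOn {v : ι → V} {a : ι → 𝕜} (ha : 0 ≤ a)
    (hdep : ¬LinearIndepOn 𝕜 v (support a)) :
    ∃ b : ι → 𝕜, 0 ≤ b ∧ support b ⊂ support a ∧ ∑ i, b i • v i = ∑ i, a i • v i := by
  classical
  rw [show support a = ↑({i | a i ≠ 0} : Finset ι) by ext; simp,
    not_linearIndepOn_finset_iff] at hdep
  obtain ⟨g, hg, j, hj, hgj⟩ := hdep
  rw [mem_filter_univ] at hj
  set d : ι → 𝕜 := (g j)⁻¹ • fun i => if a i ≠ 0 then g i else 0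
  have hd : support d ⊆ support a := fun i hi hai => hi (by simp [d, hai])
  have hdj : 0 < d j := by simp [d, hj, hgj]
  have hdv : ∑ i, d i • v i = 0 := by
    simp only [d, Pi.smul_apply, smul_eq_mul, mul_smul, ← smul_sum, ite_smul, zero_smul,
      ← sum_filter, hg, smul_zero]
  obtain ⟨t, hb, hsupp⟩ := exists_sub_smul_nonneg_support_ssubset ha hd ⟨j, hdj⟩
  refine ⟨a - t • d, hb, hsupp, ?_⟩
  simp only [Pi.sub_apply, Pi.smul_apply, sub_smul, smul_eq_mul, mul_smul, sum_sub_distrib,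
    ← smul_sum, hdv, smul_zero, sub_zero]

/-- Conic Carathéodory theorem. -/
theorem exists_nonneg_linearIndepOn_support_sum_smul_eq (v : ι → V) {a : ι → 𝕜} (ha : 0 ≤ a) :
    ∃ b : ι → 𝕜, 0 ≤ b ∧ LinearIndepOn 𝕜 v (support b) ∧ ∑ i, b i • v i = ∑ i, a i • v i := by
  induction hn : (support a).ncard using Nat.strong_induction_on generalizing a with
  | _ n ih =>
    by_cases hli : LinearIndepOn 𝕜 v (support a)
    · exact ⟨a, ha, hli, rfl⟩
    obtain ⟨b, hb, hsub, hsum⟩ := exists_nonneg_support_ssubset_of_not_linearIndepOn ha hli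
    obtain ⟨c, hc, hcli, hcsum⟩ := ih _ (hn ▸ ncard_lt_ncard hsub (toFinite _)) hb rfl
    exact ⟨c, hc, hcli, hcsum.trans hsum⟩

end ConicCaratheodory

section CoefficientBound

variable {ι V : Type*} [Fintype ι] [NormedAddCommGroup V] [NormedSpace ℝ V]

lemma sum_subtype_eq_sum_of_support_subset {M : Type*} [AddCommMonoid M] {f : ι → M}
    {s : Set ι} [Fintype s] (hf : support f ⊆ s) : ∑ i : s, f i = ∑ i, f i := by
  rw [sum_set_coe]
  exact sum_subset (subset_univ _) fun i _ hi =>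
    notMem_support.1 fun h => hi (mem_toFinset.2 (hf h))

theorem LinearIndependent.exists_sum_abs_le_mul_norm {v : ι → V} (hv : LinearIndependent ℝ v) :
    ∃ C, ∀ c : ι → ℝ, ∑ i, |c i| ≤ C * ‖∑ i, c i • v i‖ := by
  obtain ⟨K, -, hK⟩ := (Fintype.linearCombination ℝ v).injective_iff_antilipschitz.1
    hv.fintypeLinearCombination_injective
  refine ⟨Fintype.card ι * K, fun c => ?_⟩
  calc ∑ i, |c i| = ∑ i, ‖c i‖ := rfl
    _ ≤ Fintype.card ι * ‖c‖ := by simpa using Pi.sum_norm_apply_le_norm c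
    _ ≤ Fintype.card ι * (K * ‖Fintype.linearCombination ℝ v c‖) := by
      gcongr; exact hK.le_mul_norm (map_zero _) c
    _ = Fintype.card ι * K * ‖∑ i, c i • v i‖ := by
      rw [Fintype.linearCombination_apply, mul_assoc]

theorem LinearIndepOn.exists_sum_abs_le_mul_norm {v : ι → V} {s : Set ι}
    (hv : LinearIndepOn ℝ v s) :
    ∃ C, ∀ c : ι → ℝ, support c ⊆ s → ∑ i, |c i| ≤ C * ‖∑ i, c i • v i‖ := by
  classical
  obtain ⟨C, hC⟩ := LinearIndependent.exists_sum_abs_le_mul_norm hv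
  refine ⟨C, fun c hc => ?_⟩
  rw [← sum_subtype_eq_sum_of_support_subset (f := fun i => |c i|)
      ((support_comp_subset abs_zero c).trans hc),
    ← sum_subtype_eq_sum_of_support_subset (f := fun i => c i • v i)
      ((support_smul_subset_left c v).trans hc)]
  exact hC fun i => c i

theorem exists_nonneg_sum_smul_eq_sum_le_mul_norm (v : ι → V) :
    ∃ D, ∀ a : ι → ℝ, 0 ≤ a → ∃ b : ι → ℝ, 0 ≤ b ∧ ∑ i, b i • v i = ∑ i, a i • v i ∧
      ∑ i, b i ≤ D * ‖∑ i, a i • v i‖ := by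
  have hC (s : Set ι) : ∃ C, LinearIndepOn ℝ v s →
      ∀ c : ι → ℝ, support c ⊆ s → ∑ i, |c i| ≤ C * ‖∑ i, c i • v i‖ := by
    by_cases hs : LinearIndepOn ℝ v s
    · obtain ⟨C, hC⟩ := hs.exists_sum_abs_le_mul_norm
      exact ⟨C, fun _ => hC⟩
    · exact ⟨0, fun h => absurd h hs⟩
  choose C hC using hC
  obtain ⟨D, hD⟩ := (finite_range C).bddAbove
  refine ⟨D, fun a ha => ?_⟩
  obtain ⟨b, hb, hli, hsum⟩ := exists_nonneg_linearIndepOn_support_sum_smul_eq v ha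
  refine ⟨b, hb, hsum, ?_⟩
  rw [← hsum]
  calc ∑ i, b i ≤ ∑ i, |b i| := sum_le_sum fun i _ => le_abs_self _
    _ ≤ C (support b) * ‖∑ i, b i • v i‖ := hC _ hli b subset_rfl
    _ ≤ D * ‖∑ i, b i • v i‖ := by gcongr; exact hD ⟨_, rfl⟩

end CoefficientBound

theorem exists_inner_le_mul_norm_of_mem_hull {ι V : Type*} [Fintype ι] [NormedAddCommGroup V]
    [InnerProductSpace ℝ V] (v : ι → V) :
    ∃ D, ∀ (y : V) (B : ℝ), 0 ≤ B → (∀ i, ⟪y, v i⟫ ≤ B) →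
      ∀ u ∈ PointedCone.hull ℝ (range v), ⟪y, u⟫ ≤ B * D * ‖u‖ := by
  obtain ⟨D, hD⟩ := exists_nonneg_sum_smul_eq_sum_le_mul_norm v
  refine ⟨D, fun y B hB hy u hu => ?_⟩
  obtain ⟨c, rfl⟩ := (Submodule.mem_span_range_iff_exists_fun _).1 hu
  obtain ⟨b, hb, hsum, hbD⟩ := hD (fun i => c i) fun i => (c i).2
  simp only [← Nonneg.coe_smul, ← hsum] at hbD ⊢
  calc ⟪y, ∑ i, b i • v i⟫ = ∑ i, b i * ⟪y, v i⟫ := by simp [inner_sum, real_inner_smul_right]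
    _ ≤ ∑ i, b i * B := by gcongr with i; exacts [hb i, hy i]
    _ = B * ∑ i, b i := by rw [← sum_mul, mul_comm]
    _ ≤ B * (D * ‖∑ i, b i • v i‖) := by gcongr
    _ = B * D * ‖∑ i, b i • v i‖ := by ring

section Voronoi

variable {n : ℕ}

lemma mem_halfSpace_iff_dist_le {p q x : E n} : x ∈ halfSpace p q ↔ dist x p ≤ dist x q := by
  have hexp : ‖x - q‖ ^ 2 = ‖x - p‖ ^ 2 - 2 * ⟪x - p, q - p⟫ + ‖q - p‖ ^ 2 := by
    rw [← norm_sub_sq_real, sub_sub_sub_cancel_right]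
  rw [dist_eq_norm, dist_eq_norm, ← sq_le_sq₀ (norm_nonneg _) (norm_nonneg _), hexp]
  change ⟪x - p, q - p⟫ ≤ 1 / 2 * ‖q - p‖ ^ 2 ↔ _
  constructor <;> intro h <;> linarith

lemma voronoiCell_eq_biInter_halfSpace (P : Set (E n)) (p : E n) :
    voronoiCell P p = ⋂ q ∈ P, halfSpace p q := by
  ext x
  simp [voronoiCell, mem_halfSpace_iff_dist_le]

lemma halfSpace_eq_setOf_inner_le (p q : E n) :
    halfSpace p q = {x | ⟪x, q - p⟫ ≤ 1 / 2 * ‖q - p‖ ^ 2 + ⟪p, q - p⟫} := by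
  ext x
  simp only [halfSpace, mem_ofPred_eq, inner_sub_left]
  constructor <;> intro h <;> linarith

lemma isPolyhedron_biInter {ι : Type*} {s : Set ι} (hs : s.Finite) (y : ι → E n) (α : ι → ℝ) :
    IsPolyhedron (⋂ i ∈ s, {x : E n | ⟪x, y i⟫ ≤ α i}) := by
  obtain ⟨k, f, -, rfl⟩ := hs.fin_param
  exact ⟨k, y ∘ f, α ∘ f, biInter_range⟩

lemma isPolyhedron_biInter_halfSpace (p : E n) {F : Set (E n)} (hF : F.Finite) :
    IsPolyhedron (⋂ q ∈ F, halfSpace p q) := by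
  simp_rw [halfSpace_eq_setOf_inner_le]
  exact isPolyhedron_biInter hF _ _

lemma coneHull_eq_hull (M : Set (E n)) : coneHull M = (PointedCone.hull ℝ M : Set (E n)) := by
  ext x
  constructor
  · rintro ⟨k, v, c, hv, hc, rfl⟩
    exact Submodule.sum_mem _ fun i _ =>
      Submodule.smul_mem _ (⟨c i, hc i⟩ : {c : ℝ // 0 ≤ c}) (Submodule.subset_span (hv i))
  · intro hx
    obtain ⟨k, c, w, rfl⟩ := Submodule.mem_span_set'.1 hx
    exact ⟨k, fun i => w i, fun i => c i, fun i => (w i).2, fun i => (c i).2, rfl⟩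

lemma FinitelyGeneratedCone.exists_finset_hull_eq {M : Set (E n)}
    (h : FinitelyGeneratedCone (coneHull M)) :
    ∃ T : Finset (E n), ↑T ⊆ M ∧ PointedCone.hull ℝ M = PointedCone.hull ℝ (T : Set (E n)) := by
  obtain ⟨k, v, hv⟩ := h
  rw [coneHull_eq_hull, coneHull_eq_hull, SetLike.coe_set_eq] at hv
  have hfg : (PointedCone.hull ℝ M).FG := hv ▸ Submodule.fg_span (finite_range v)
  exact (Submodule.fg_span_iff_fg_span_finset_subset M).1 hfg

theorem exists_voronoiCell_eq_biInter_closedBall (P : Set (E n)) (p : E n)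
    (hfg : FinitelyGeneratedCone (dirCone P p)) :
    ∃ R, voronoiCell P p = ⋂ q ∈ P ∩ Metric.closedBall p R, halfSpace p q := by
  obtain ⟨T, hTP, hT⟩ := FinitelyGeneratedCone.exists_finset_hull_eq hfg
  obtain ⟨D, hD⟩ := exists_inner_le_mul_norm_of_mem_hull (fun w : T => (w : E n))
  obtain ⟨R₀, hR₀⟩ : ∃ R₀ : ℝ, ∀ w ∈ T, ‖w‖ ≤ R₀ :=
    ⟨∑ w ∈ T, ‖w‖, fun w hw => single_le_sum (fun w _ => norm_nonneg w) hw⟩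
  refine ⟨max R₀ (R₀ ^ 2 * D), ?_⟩
  rw [voronoiCell_eq_biInter_halfSpace]
  refine subset_antisymm (biInter_mono inter_subset_left fun _ _ => subset_rfl) fun x hx => ?_
  have hnear (q : E n) (hq : q ∈ P) (hqR : ‖q - p‖ ≤ max R₀ (R₀ ^ 2 * D)) : x ∈ halfSpace p q :=
    mem_iInter₂.1 hx q ⟨hq, by rwa [Metric.mem_closedBall, dist_eq_norm]⟩
  refine mem_iInter₂.2 fun r hr => ?_
  rcases le_or_gt ‖r - p‖ (max R₀ (R₀ ^ 2 * D)) with hrR | hrR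
  · exact hnear r hr hrR
  have hgen (w : T) : ⟪x - p, (w : E n)⟫ ≤ 1 / 2 * R₀ ^ 2 := by
    obtain ⟨w, hw⟩ := w
    obtain ⟨q, hq, rfl⟩ := hTP hw
    calc ⟪x - p, q - p⟫ ≤ 1 / 2 * ‖q - p‖ ^ 2 := hnear q hq ((hR₀ _ hw).trans (le_max_left _ _))
      _ ≤ 1 / 2 * R₀ ^ 2 := by gcongr; exact hR₀ _ hw
  have hrT : r - p ∈ PointedCone.hull ℝ (range fun w : T => (w : E n)) := by
    rw [Subtype.range_coe_subtype]
    change r - p ∈ PointedCone.hull ℝ (T : Set (E n))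
    rw [← hT]
    exact Submodule.subset_span ⟨r, hr, rfl⟩
  have hfar := hD (x - p) _ (by positivity) hgen (r - p) hrT
  have hR₀D := mul_le_mul_of_nonneg_right ((le_max_right _ _).trans hrR.le) (norm_nonneg (r - p))
  change ⟪x - p, r - p⟫ ≤ 1 / 2 * ‖r - p‖ ^ 2
  linarith [sq ‖r - p‖]

end Voronoi

theorem stmt14_general {n : ℕ} (P : Set (E n)) (hP : IsDiscretePointSet P) (p : E n)
    (hfg : FinitelyGeneratedCone (dirCone P p)) :
    IsPolyhedron (voronoiCell P p) := by
  obtain ⟨R, hR⟩ := exists_voronoiCell_eq_biInter_closedBall P p hfg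
  rw [hR]
  exact isPolyhedron_biInter_halfSpace p (hP _ Metric.isBounded_closedBall)

theorem stmt14 {n : ℕ} (P : Set (E n)) (hP : IsDiscretePointSet P) (p : E n) (hp : p ∈ P)
    (hbd : p ∈ frontier (convexHull ℝ P))
    (hfg : FinitelyGeneratedCone (dirCone P p)) :
    IsPolyhedron (voronoiCell P p) :=
  stmt14_general P hP p hfg
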